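/- For the random phased subspace state |ψ_{S,f}⟩ = 2^{-d/2} Σ_{x∈S} (−1)^{f(x)} |x⟩ with S a fixed d-dimensional subspace of F₂^n and f : S → {0,1} uniformly random, the partial sum of E_f[|ψ_{S,f}⟩⟨ψ_{S,f}|^{⊗t}] over index tuples with x₁,...,x_t all distinct equals (t!/2^{dt}) Σ_{X⊆S, |X|=t} |Sym_X⟩⟨Sym_X|, where |Sym_X⟩ = (t!)^{-1/2} Σ_{π∈S_t} |x_{π(1)}⋯x_{π(t)}⟩ for X = {x₁,...,x_t}; this operator has trace (t!/2^{dt})·binom(2^d, t) ≥ 1 − t²/2^d. -/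

import Mathlib

open Classical

/-- Amplitude of the random phased subspace state
`|ψ_{S,f}⟩ = 2^{-d/2} Σ_{x∈S} (−1)^{f(x)} |x⟩`. -/
noncomputable def psiSf (n d : ℕ) (S : Finset (Fin n → ZMod 2))
    (f : (Fin n → ZMod 2) → Bool) : (Fin n → ZMod 2) → ℂ := fun v =>
  if v ∈ S then (if f v then -1 else 1) * (((Real.sqrt ((2 : ℝ) ^ d))⁻¹ : ℝ) : ℂ) else 0

/-- `E_f[|ψ_{S,f}⟩⟨ψ_{S,f}|^{⊗t}]`, the average over a uniformly random phase
function `f` of `t` copies of the phased subspace state. -/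
noncomputable def tCopyAvg (n d t : ℕ) (S : Finset (Fin n → ZMod 2)) :
    Matrix (Fin t → (Fin n → ZMod 2)) (Fin t → (Fin n → ZMod 2)) ℂ :=
  (Fintype.card ((Fin n → ZMod 2) → Bool) : ℂ)⁻¹ •
    ∑ f : (Fin n → ZMod 2) → Bool, Matrix.of fun x y =>
      (∏ τ, psiSf n d S f (x τ)) * ∏ τ, (starRingEnd ℂ) (psiSf n d S f (y τ))

/-- The partial sum of `E_f[|ψ_{S,f}⟩⟨ψ_{S,f}|^{⊗t}]` over index tuples whose
row-index tuple `(x₁,…,x_t)` consists of distinct elements. -/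
noncomputable def partialSum (n d t : ℕ) (S : Finset (Fin n → ZMod 2)) :
    Matrix (Fin t → (Fin n → ZMod 2)) (Fin t → (Fin n → ZMod 2)) ℂ :=
  Matrix.of fun x y => if Function.Injective x then tCopyAvg n d t S x y else 0

/-- The symmetrized basis state `|Sym_X⟩ = (t!)^{-1/2} Σ_{π∈S_t} |x_{π(1)}⋯x_{π(t)}⟩`
for a `t`-element set `X = {x₁,…,x_t}`: its amplitude at `z` is `(t!)^{-1/2}` if `z`
enumerates `X` injectively, and `0` otherwise. -/
noncomputable def symVec (n t : ℕ) (X : Finset (Fin n → ZMod 2)) :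
    (Fin t → (Fin n → ZMod 2)) → ℂ := fun z =>
  if Function.Injective z ∧ ∀ τ, z τ ∈ X
    then (((Real.sqrt (Nat.factorial t : ℝ))⁻¹ : ℝ) : ℂ) else 0


section Aux
open Finset
variable {α β : Type*}

/-- fiber count of an injective function -/
lemma count_inj [Fintype α] [DecidableEq β] {x : α → β} (hx : Function.Injective x) (v : β) :
    (Finset.univ.filter (fun τ => x τ = v)).card
      = if v ∈ Finset.image x Finset.univ then 1 else 0 := by
  split_ifs with h
  · obtain ⟨σ, -, rfl⟩ := Finset.mem_image.mp h
    have : Finset.univ.filter (fun τ => x τ = x σ) = {σ} := by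
      ext τ; simp [hx.eq_iff]
    simp [this]
  · have : Finset.univ.filter (fun τ => x τ = v) = ∅ := by
      ext τ; simp only [Finset.mem_filter, Finset.mem_univ, true_and, Finset.notMem_empty,
        iff_false]
      rintro rfl
      exact h (Finset.mem_image_of_mem x (Finset.mem_univ τ))
    simp [this]

lemma prod_comp_count [Fintype α] [Fintype β] [DecidableEq β] {M : Type*} [CommMonoid M]
    (x : α → β) (g : β → M) :
    ∏ τ, g (x τ) = ∏ v, g v ^ (Finset.univ.filter (fun τ => x τ = v)).card := by
  rw [← Finset.prod_fiberwise_of_maps_to (fun τ _ => Finset.mem_univ (x τ)) (fun τ => g (x τ))]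
  refine Finset.prod_congr rfl fun v _ => ?_
  rw [Finset.prod_congr rfl (fun τ hτ => by rw [(Finset.mem_filter.mp hτ).2] : ∀ τ ∈ _, g (x τ) = g v),
    Finset.prod_const]

lemma sum_signs [Fintype β] [DecidableEq β] (c : β → ℕ) :
    ∑ f : β → Bool, ∏ v, (if f v then (-1 : ℂ) else 1) ^ c v
      = if ∀ v, Even (c v) then (Fintype.card (β → Bool) : ℂ) else 0 := by
  rw [← Fintype.piFinset_univ, ← Finset.prod_univ_sum (fun _ => (Finset.univ : Finset Bool))
    (fun v b => (if b then (-1 : ℂ) else 1) ^ c v)]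
  have hb : ∀ v : β, (∑ b : Bool, (if b then (-1 : ℂ) else 1) ^ c v)
      = if Even (c v) then 2 else 0 := by
    intro v
    rw [Fintype.sum_bool]
    simp only [Bool.false_eq_true, if_true, if_false, one_pow]
    by_cases h : Even (c v)
    · rw [h.neg_one_pow, if_pos h]; norm_num
    · rw [(Nat.not_even_iff_odd.mp h).neg_one_pow, if_neg h]; ring
  rw [Finset.prod_congr rfl fun v _ => hb v]
  split_ifs with h
  · rw [Finset.prod_congr rfl fun v _ => if_pos (h v), Finset.prod_const]
    simp [Fintype.card_fun]
  · push_neg at h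
    obtain ⟨v, hv⟩ := h
    exact Finset.prod_eq_zero (Finset.mem_univ v) (if_neg hv)

lemma comb_iff [Fintype α] [DecidableEq β] {x y : α → β} (S : Finset β)
    (hx : Function.Injective x) :
    ((∀ τ, x τ ∈ S) ∧ (∀ τ, y τ ∈ S) ∧
        ∀ v, Even ((Finset.univ.filter (fun τ => x τ = v)).card
          + (Finset.univ.filter (fun τ => y τ = v)).card))
      ↔ (Function.Injective y ∧ Finset.image y Finset.univ = Finset.image x Finset.univ
          ∧ ∀ τ, x τ ∈ S) := by
  constructor
  · rintro ⟨hxS, hyS, hev⟩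
    have hsub : Finset.image x Finset.univ ⊆ Finset.image y Finset.univ := by
      intro v hv
      have h1 : (Finset.univ.filter (fun τ => x τ = v)).card = 1 := by
        rw [count_inj hx, if_pos hv]
      have h2 := hev v
      rw [h1] at h2
      have hodd : ¬ Even ((Finset.univ.filter (fun τ => y τ = v)).card) := by
        intro he
        exact (Nat.even_add_one.mp (by rwa [add_comm] at h2 : Even (_ + 1))) he
      have hne : (Finset.univ.filter (fun τ => y τ = v)).card ≠ 0 := by
        intro h0; exact hodd (h0 ▸ Even.zero)
      obtain ⟨τ, hτ⟩ := Finset.card_ne_zero.mp hne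
      have h3 := (Finset.mem_filter.mp hτ).2
      exact h3 ▸ Finset.mem_image_of_mem y (Finset.mem_univ τ)
    have hcx : (Finset.image x Finset.univ).card = Fintype.card α :=
      (Finset.card_image_of_injective _ hx).trans Finset.card_univ
    have hcy : (Finset.image y Finset.univ).card = Fintype.card α :=
      le_antisymm (Finset.card_image_le.trans_eq Finset.card_univ)
        (hcx ▸ Finset.card_le_card hsub)
    have heq : Finset.image x Finset.univ = Finset.image y Finset.univ :=
      Finset.eq_of_subset_of_card_le hsub (by rw [hcx, hcy])
    have hy : Function.Injective y := by
      have := Finset.card_image_iff.mp (hcy.trans Finset.card_univ.symm)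
      rw [Finset.coe_univ] at this
      exact Set.injOn_univ.mp this
    exact ⟨hy, heq.symm, hxS⟩
  · rintro ⟨hy, him, hxS⟩
    refine ⟨hxS, fun τ => ?_, fun v => ?_⟩
    · have : y τ ∈ Finset.image x Finset.univ := him ▸ Finset.mem_image_of_mem y (Finset.mem_univ τ)
      obtain ⟨σ, -, hσ⟩ := Finset.mem_image.mp this
      exact hσ ▸ hxS σ
    · rw [count_inj hx, count_inj hy, him]
      split_ifs <;> simp


lemma conj_psi (n d : ℕ) (S : Finset (Fin n → ZMod 2)) (f : (Fin n → ZMod 2) → Bool)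
    (v : Fin n → ZMod 2) : (starRingEnd ℂ) (psiSf n d S f v) = psiSf n d S f v := by
  unfold psiSf; split_ifs <;> simp

lemma psi_form (n d : ℕ) (S : Finset (Fin n → ZMod 2)) (f : (Fin n → ZMod 2) → Bool)
    (v : Fin n → ZMod 2) :
    psiSf n d S f v = (if v ∈ S then (1 : ℂ) else 0) *
      ((if f v then (-1 : ℂ) else 1) * (((Real.sqrt ((2 : ℝ) ^ d))⁻¹ : ℝ) : ℂ)) := by
  unfold psiSf; split_ifs <;> ring

lemma conj_symVec (n t : ℕ) (X : Finset (Fin n → ZMod 2)) (z : Fin t → (Fin n → ZMod 2)) :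
    (starRingEnd ℂ) (symVec n t X z) = symVec n t X z := by
  unfold symVec; split_ifs <;> simp

lemma aa_eq (d t : ℕ) :
    ((((Real.sqrt ((2 : ℝ) ^ d))⁻¹ : ℝ) : ℂ)) ^ t * ((((Real.sqrt ((2 : ℝ) ^ d))⁻¹ : ℝ) : ℂ)) ^ t
      = ((2 : ℂ) ^ (d * t))⁻¹ := by
  have h : ((Real.sqrt ((2:ℝ)^d))⁻¹)^t * ((Real.sqrt ((2:ℝ)^d))⁻¹)^t = ((2:ℝ)^(d*t))⁻¹ := by
    rw [← mul_pow, ← mul_inv, Real.mul_self_sqrt (by positivity), inv_pow, ← pow_mul]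
  calc _ = (((((Real.sqrt ((2:ℝ)^d))⁻¹)^t * ((Real.sqrt ((2:ℝ)^d))⁻¹)^t : ℝ)) : ℂ) := by
        push_cast; ring
    _ = ((2 : ℂ) ^ (d * t))⁻¹ := by rw [h]; push_cast; ring

lemma tCopy_eq (n d t : ℕ) (S : Finset (Fin n → ZMod 2)) {x y : Fin t → (Fin n → ZMod 2)}
    (hx : Function.Injective x) :
    tCopyAvg n d t S x y
      = if (Function.Injective y ∧
            Finset.image y Finset.univ = Finset.image x Finset.univ ∧ ∀ τ, x τ ∈ S)
          then ((2 : ℂ) ^ (d * t))⁻¹ else 0 := by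
  set a : ℂ := (((Real.sqrt ((2 : ℝ) ^ d))⁻¹ : ℝ) : ℂ) with ha
  have hterm : ∀ f : (Fin n → ZMod 2) → Bool,
      (∏ τ, psiSf n d S f (x τ)) * ∏ τ, (starRingEnd ℂ) (psiSf n d S f (y τ))
        = ((∏ τ, (if x τ ∈ S then (1:ℂ) else 0)) * (∏ τ, (if y τ ∈ S then (1:ℂ) else 0))
            * (a ^ t * a ^ t)) *
          ∏ v, (if f v then (-1:ℂ) else 1) ^
            ((Finset.univ.filter (fun τ => x τ = v)).card
              + (Finset.univ.filter (fun τ => y τ = v)).card) := by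
    intro f
    simp only [conj_psi]
    simp only [psi_form]
    rw [Finset.prod_mul_distrib, Finset.prod_mul_distrib,
      Finset.prod_mul_distrib, Finset.prod_mul_distrib,
      Finset.prod_const,
      prod_comp_count x (fun v => if f v then (-1:ℂ) else 1),
      prod_comp_count y (fun v => if f v then (-1:ℂ) else 1)]
    have hsgn : (∏ v, (if f v then (-1:ℂ) else 1) ^ (Finset.univ.filter (fun τ => x τ = v)).card)
        * (∏ v, (if f v then (-1:ℂ) else 1) ^ (Finset.univ.filter (fun τ => y τ = v)).card)
        = ∏ v, (if f v then (-1:ℂ) else 1) ^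
            ((Finset.univ.filter (fun τ => x τ = v)).card
              + (Finset.univ.filter (fun τ => y τ = v)).card) := by
      rw [← Finset.prod_mul_distrib]
      exact Finset.prod_congr rfl fun v _ => (pow_add _ _ _).symm
    rw [← hsgn]
    simp only [Finset.card_univ, Fintype.card_fin, ha]
    ring
  rw [tCopyAvg]
  simp only [Matrix.smul_apply, Matrix.sum_apply, Matrix.of_apply, smul_eq_mul]
  rw [Finset.sum_congr rfl fun f _ => hterm f, ← Finset.mul_sum, sum_signs]
  simp only [Finset.prod_boole, Finset.mem_univ, forall_const]
  have hcard : (Fintype.card ((Fin n → ZMod 2) → Bool) : ℂ) ≠ 0 := by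
    exact_mod_cast Nat.cast_ne_zero.mpr Fintype.card_ne_zero
  by_cases hP : Function.Injective y ∧
      Finset.image y Finset.univ = Finset.image x Finset.univ ∧ ∀ τ, x τ ∈ S
  · obtain ⟨hA, hB, hE⟩ := (comb_iff S hx).mpr hP
    rw [if_pos hA, if_pos hB, if_pos hE, if_pos hP, aa_eq]
    field_simp
  · rw [if_neg hP]
    have hn : ¬ ((∀ τ, x τ ∈ S) ∧ (∀ τ, y τ ∈ S) ∧
        ∀ v, Even ((Finset.univ.filter (fun τ => x τ = v)).card
          + (Finset.univ.filter (fun τ => y τ = v)).card)) :=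
      fun h => hP ((comb_iff S hx).mp h)
    by_cases h1 : ∀ τ, x τ ∈ S
    · by_cases h2 : ∀ τ, y τ ∈ S
      · rw [if_neg (fun hE => hn ⟨h1, h2, hE⟩)]; simp
      · rw [if_neg h2]; simp
    · rw [if_neg h1]; simp

lemma hb_fact (t : ℕ) :
    (((Real.sqrt (Nat.factorial t : ℝ))⁻¹ : ℝ) : ℂ) * (((Real.sqrt (Nat.factorial t : ℝ))⁻¹ : ℝ) : ℂ)
      = ((Nat.factorial t : ℂ))⁻¹ := by
  rw [← Complex.ofReal_mul, ← mul_inv, Real.mul_self_sqrt (by positivity)]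
  push_cast
  ring

lemma rhs_eq (n d t : ℕ) (S : Finset (Fin n → ZMod 2)) {x y : Fin t → (Fin n → ZMod 2)}
    (hx : Function.Injective x) :
    ∑ X ∈ S.powersetCard t, symVec n t X x * (starRingEnd ℂ) (symVec n t X y)
      = if (Function.Injective y ∧
            Finset.image y Finset.univ = Finset.image x Finset.univ ∧ ∀ τ, x τ ∈ S)
          then ((Nat.factorial t : ℂ))⁻¹ else 0 := by
  have himage : ∀ (z : Fin t → (Fin n → ZMod 2)), Function.Injective z →
      ∀ X ∈ S.powersetCard t, (∀ τ, z τ ∈ X) → Finset.image z Finset.univ = X := by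
    intro z hz X hX hmem
    obtain ⟨hXS, hcard⟩ := Finset.mem_powersetCard.mp hX
    refine Finset.eq_of_subset_of_card_le ?_ ?_
    · intro v hv; obtain ⟨τ, -, rfl⟩ := Finset.mem_image.mp hv; exact hmem τ
    · rw [Finset.card_image_of_injective _ hz, Finset.card_univ, Fintype.card_fin, hcard]
  by_cases hP : Function.Injective y ∧
      Finset.image y Finset.univ = Finset.image x Finset.univ ∧ ∀ τ, x τ ∈ S
  · obtain ⟨hy, him, hxS⟩ := hP
    have hmemX : Finset.image x Finset.univ ∈ S.powersetCard t :=
      Finset.mem_powersetCard.mpr ⟨fun v hv => by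
          obtain ⟨τ, -, rfl⟩ := Finset.mem_image.mp hv; exact hxS τ,
        by rw [Finset.card_image_of_injective _ hx, Finset.card_univ, Fintype.card_fin]⟩
    rw [Finset.sum_eq_single_of_mem _ hmemX ?_, if_pos ⟨hy, him, hxS⟩]
    · rw [conj_symVec]
      unfold symVec
      rw [if_pos ⟨hx, fun τ => Finset.mem_image_of_mem x (Finset.mem_univ τ)⟩,
        if_pos ⟨hy, fun τ => him ▸ Finset.mem_image_of_mem y (Finset.mem_univ τ)⟩]
      exact hb_fact t
    · intro X hX hne
      rw [conj_symVec]
      unfold symVec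
      rw [if_neg, zero_mul]
      rintro ⟨hxi, hmem⟩
      exact hne (himage x hx X hX hmem).symm
  · rw [if_neg hP]
    refine Finset.sum_eq_zero fun X hX => ?_
    rw [conj_symVec]
    unfold symVec
    by_cases h1 : Function.Injective x ∧ ∀ τ, x τ ∈ X
    · by_cases h2 : Function.Injective y ∧ ∀ τ, y τ ∈ X
      · exfalso
        apply hP
        have hXx := himage x hx X hX h1.2
        have hXS := (Finset.mem_powersetCard.mp hX).1
        refine ⟨h2.1, ?_, fun τ => hXS (h1.2 τ)⟩
        have hsub : Finset.image y Finset.univ ⊆ Finset.image x Finset.univ := by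
          intro v hv
          obtain ⟨τ, -, rfl⟩ := Finset.mem_image.mp hv
          rw [hXx]
          exact h2.2 τ
        exact Finset.eq_of_subset_of_card_le hsub
          (by rw [Finset.card_image_of_injective _ hx, Finset.card_image_of_injective _ h2.1])
      · rw [if_neg h2, mul_zero]
    · rw [if_neg h1, zero_mul]

lemma one_sub_sum_le_prod {ι : Type*} (s : Finset ι) (f : ι → ℝ)
    (h0 : ∀ i ∈ s, 0 ≤ f i) (h1 : ∀ i ∈ s, f i ≤ 1) :
    1 - ∑ i ∈ s, f i ≤ ∏ i ∈ s, (1 - f i) := by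
  classical
  revert h0 h1
  refine Finset.induction_on s (by simp) ?_
  intro j s hj ih h0 h1
  rw [Finset.sum_insert hj, Finset.prod_insert hj]
  have hih := ih (fun i hi => h0 i (Finset.mem_insert_of_mem hi))
    (fun i hi => h1 i (Finset.mem_insert_of_mem hi))
  have hj0 := h0 j (Finset.mem_insert_self j s)
  have hj1 := h1 j (Finset.mem_insert_self j s)
  have hs0 : 0 ≤ ∑ i ∈ s, f i :=
    Finset.sum_nonneg fun i hi => h0 i (Finset.mem_insert_of_mem hi)
  nlinarith [hih, hj0, hj1, hs0]

end Aux

/-- For the random phased subspace state over a fixed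
`d`-dimensional subspace `S` of `F₂ⁿ` with uniformly random phases, the partial sum
of `E_f[|ψ_{S,f}⟩⟨ψ_{S,f}|^{⊗t}]` over index tuples with `x₁,…,x_t` all distinct
equals `(t!/2^{dt}) Σ_{X⊆S, |X|=t} |Sym_X⟩⟨Sym_X|`; this operator has trace
`(t!/2^{dt})·binom(2^d, t) ≥ 1 − t²/2^d`. -/
theorem stmt17 (n d t : ℕ) (ht : 0 < t) (htd : t ≤ d)
    (S : Finset (Fin n → ZMod 2))
    (hS : ∃ W : Submodule (ZMod 2) (Fin n → ZMod 2),
        (S : Set (Fin n → ZMod 2)) = W ∧ Module.finrank (ZMod 2) W = d) :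
    partialSum n d t S
        = ((Nat.factorial t : ℝ) / (2 : ℝ) ^ (d * t)) •
            ∑ X ∈ S.powersetCard t,
              Matrix.of (fun x y => symVec n t X x * (starRingEnd ℂ) (symVec n t X y))
      ∧ (partialSum n d t S).trace
          = ((((Nat.factorial t : ℝ) / (2 : ℝ) ^ (d * t)) * (Nat.choose (2 ^ d) t : ℝ) : ℝ) : ℂ)
      ∧ 1 - (t : ℝ) ^ 2 / 2 ^ d
          ≤ ((Nat.factorial t : ℝ) / (2 : ℝ) ^ (d * t)) * (Nat.choose (2 ^ d) t : ℝ) := by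
  obtain ⟨W, hW, hrank⟩ := hS
  have h2C : ((2 : ℂ) ^ (d * t)) ≠ 0 := pow_ne_zero _ two_ne_zero
  have htC : ((Nat.factorial t : ℂ)) ≠ 0 := Nat.cast_ne_zero.mpr (Nat.factorial_ne_zero t)
  have hcardS : S.card = 2 ^ d := by
    haveI : Fintype ↥W := Fintype.ofFinite ↥W
    have h1 : Fintype.card ↥W = 2 ^ d := by
      rw [Module.card_eq_pow_finrank (K := ZMod 2) (V := ↥W), ZMod.card, hrank]
    calc S.card = ((S : Set (Fin n → ZMod 2))).ncard := (Set.ncard_coe_finset S).symm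
      _ = ((W : Set (Fin n → ZMod 2))).ncard := by rw [hW]
      _ = 2 ^ d := by
          rw [← Nat.card_coe_set_eq, SetLike.coe_sort_coe, Nat.card_eq_fintype_card, h1]
  refine ⟨?_, ?_, ?_⟩
  · ext x y
    show partialSum n d t S x y = _
    rw [partialSum, Matrix.of_apply]
    by_cases hx : Function.Injective x
    · rw [if_pos hx, tCopy_eq n d t S hx, Matrix.smul_apply, Matrix.sum_apply]
      simp only [Matrix.of_apply]
      rw [rhs_eq n d t S hx, Complex.real_smul]
      split_ifs with h
      · push_cast
        field_simp
      · ring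
    · rw [if_neg hx, Matrix.smul_apply, Matrix.sum_apply]
      simp only [Matrix.of_apply]
      have hz : ∀ X ∈ S.powersetCard t, symVec n t X x * (starRingEnd ℂ) (symVec n t X y) = 0 := by
        intro X _
        unfold symVec
        rw [if_neg (fun h => hx h.1), zero_mul]
      rw [Finset.sum_eq_zero hz, smul_zero]
  · have hcount : (Finset.univ.filter
        (fun x : Fin t → (Fin n → ZMod 2) => Function.Injective x ∧ ∀ τ, x τ ∈ S)).card
          = (2 ^ d).descFactorial t := by
      rw [← Fintype.card_subtype]
      have e : {x : Fin t → (Fin n → ZMod 2) // Function.Injective x ∧ ∀ τ, x τ ∈ S}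
          ≃ (Fin t ↪ ↥S) :=
        { toFun := fun x => ⟨fun τ => ⟨x.1 τ, x.2.2 τ⟩, fun a b h => x.2.1 (congrArg Subtype.val h)⟩
          invFun := fun e => ⟨fun τ => (e τ : Fin n → ZMod 2),
            fun a b h => e.injective (Subtype.ext h), fun τ => (e τ).2⟩
          left_inv := fun x => rfl
          right_inv := fun e => by ext τ; rfl }
      rw [Fintype.card_congr e, Fintype.card_embedding_eq, Fintype.card_coe, Fintype.card_fin,
        hcardS]
    have hdiag : ∀ x : Fin t → (Fin n → ZMod 2),
        partialSum n d t S x x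
          = if (Function.Injective x ∧ ∀ τ, x τ ∈ S) then ((2 : ℂ) ^ (d * t))⁻¹ else 0 := by
      intro x
      rw [partialSum, Matrix.of_apply]
      by_cases hx : Function.Injective x
      · rw [if_pos hx, tCopy_eq n d t S hx]
        by_cases hxS : ∀ τ, x τ ∈ S
        · rw [if_pos ⟨hx, rfl, hxS⟩, if_pos ⟨hx, hxS⟩]
        · rw [if_neg (fun h => hxS h.2.2), if_neg (fun h => hxS h.2)]
      · rw [if_neg hx, if_neg (fun h => hx h.1)]
    rw [Matrix.trace]
    simp only [Matrix.diag]
    rw [Finset.sum_congr rfl fun x _ => hdiag x, ← Finset.sum_filter, Finset.sum_const,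
      nsmul_eq_mul, hcount, Nat.descFactorial_eq_factorial_mul_choose]
    push_cast
    field_simp
  · have h2d : (0 : ℝ) < 2 ^ d := by positivity
    have htle : t ≤ 2 ^ d := le_trans htd (Nat.le_of_lt (Nat.lt_two_pow_self (n := d)))
    have hprod : ((Nat.factorial t : ℝ) / (2 : ℝ) ^ (d * t)) * (Nat.choose (2 ^ d) t : ℝ)
        = ∏ i ∈ Finset.range t, (1 - (i : ℝ) / 2 ^ d) := by
      have hc : ∀ i ∈ Finset.range t, (1 - (i : ℝ) / 2 ^ d) = (((2 ^ d - i : ℕ) : ℝ)) / 2 ^ d := by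
        intro i hi
        rw [Nat.cast_sub (le_trans (le_of_lt (Finset.mem_range.mp hi)) htle)]
        push_cast
        field_simp
        try ring
      rw [Finset.prod_congr rfl hc, Finset.prod_div_distrib, Finset.prod_const,
        ← Nat.cast_prod, ← Nat.descFactorial_eq_prod_range,
        Nat.descFactorial_eq_factorial_mul_choose, Finset.card_range, pow_mul]
      push_cast
      field_simp
    rw [hprod]
    have hweier := one_sub_sum_le_prod (Finset.range t) (fun i => (i : ℝ) / 2 ^ d)
      (fun i _ => by positivity)
      (fun i hi => by
        rw [div_le_one h2d]
        exact_mod_cast le_of_lt (lt_of_lt_of_le (Finset.mem_range.mp hi) htle))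
    have hsum : ∑ i ∈ Finset.range t, (i : ℝ) / 2 ^ d ≤ (t : ℝ) ^ 2 / 2 ^ d := by
      calc ∑ i ∈ Finset.range t, (i : ℝ) / 2 ^ d
          ≤ ∑ _i ∈ Finset.range t, (t : ℝ) / 2 ^ d := by
            refine Finset.sum_le_sum fun i hi => ?_
            gcongr
            exact_mod_cast le_of_lt (Finset.mem_range.mp hi)
        _ = t * ((t : ℝ) / 2 ^ d) := by rw [Finset.sum_const, Finset.card_range, nsmul_eq_mul]
        _ = (t : ℝ) ^ 2 / 2 ^ d := by ring
    calc 1 - (t : ℝ) ^ 2 / 2 ^ d ≤ 1 - ∑ i ∈ Finset.range t, (i : ℝ) / 2 ^ d := by linarith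
      _ ≤ _ := hweier
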